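/- arXiv:1909.09457 — 8 statements merged into one kernel-verified Lean document; each statement's English description precedes it below -/
import Mathlib

section
/- Consider a schedule S implementing SP² that is work-conserving fixed-priority, meaning: for every flow index j and time t ∈ ℕ, if f_j is active at t and there exists a link λ ∈ Λ_j with S_λ(t) ≠ some j, then there exist an index n < j and a link μ ∈ Λ_j ∩ Λ_n with S_μ(t) = some n. Let i be an index and j < i. If there exists a time t at which f_j is Λ_i-self-suspended, then j belongs to SS(Λ_i) := { ℓ ∈ share_i | ∃ n ∈ share_ℓ with Λ_n ∩ Λ_i = ∅ }. -/
/-- `share Λ i` is the set of indices `j` of higher-priority flows (`j < i`)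
whose route intersects the route of flow `i`. -/
def share {Link : Type*} [DecidableEq Link] (Λ : ℕ → Finset Link) (i : ℕ) : Set ℕ :=
  {j | j < i ∧ Λ j ∩ Λ i ≠ ∅}

/-- A schedule `S` implements the Simultaneous Progressing Switching Protocol (SP²):
whenever flow `i` is scheduled on some link of its route `Λ i` at time `t`,
it is scheduled on every link of its route at time `t`. -/
def ImplementsSP2 {Link : Type*} [DecidableEq Link] (Λ : ℕ → Finset Link)
    (S : Link → ℕ → Option ℕ) : Prop :=
  ∀ i t, (∃ lam ∈ Λ i, S lam t = some i) → ∀ lam' ∈ Λ i, S lam' t = some i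

/-- Flow `j` is `Λ i`-self-suspended at time `t`:
(1) `j` is active at `t`;
(2) every link of `Λ i` is idle or carries a lower-priority flow (index `> j`);
(3) `Λ j` intersects `Λ i` but `Λ j` is not a subset of `Λ i`;
(4) `j` is not scheduled on any link of `Λ i`. -/
def SelfSuspended {Link : Type*} [DecidableEq Link] (Λ : ℕ → Finset Link)
    (S : Link → ℕ → Option ℕ) (active : ℕ → ℕ → Prop) (i j t : ℕ) : Prop :=
  active j t ∧
  (∀ lam ∈ Λ i, S lam t = none ∨ ∃ n, S lam t = some n ∧ j < n) ∧
  (Λ j ∩ Λ i ≠ ∅ ∧ ¬ Λ j ⊆ Λ i) ∧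
  (∀ lam ∈ Λ i, S lam t ≠ some j)

/-- `SS Λ i` = { ℓ ∈ share_i | ∃ n ∈ share_ℓ with Λ_n ∩ Λ_i = ∅ }. -/
def SS {Link : Type*} [DecidableEq Link] (Λ : ℕ → Finset Link) (i : ℕ) : Set ℕ :=
  {l | l ∈ share Λ i ∧ ∃ n ∈ share Λ l, Λ n ∩ Λ i = ∅}

/-- Theorem 1: under a work-conserving fixed-priority SP² schedule,
if `j < i` and flow `j` is `Λ i`-self-suspended at some time, then `j ∈ SS(Λ i)`. -/
theorem stmt1 {Link : Type*} [DecidableEq Link] (Λ : ℕ → Finset Link)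
    (hne : ∀ i, (Λ i).Nonempty)
    (S : Link → ℕ → Option ℕ) (active : ℕ → ℕ → Prop)
    (hSP2 : ImplementsSP2 Λ S)
    (hWC : ∀ j t, active j t → (∃ lam ∈ Λ j, S lam t ≠ some j) →
      ∃ n, n < j ∧ ∃ mu ∈ Λ j ∩ Λ n, S mu t = some n)
    (i j : ℕ) (hji : j < i)
    (hsusp : ∃ t, SelfSuspended Λ S active i j t) :
    j ∈ SS Λ i := by
  obtain ⟨t, hact, hlow, ⟨hint, _⟩, hnotj⟩ := hsusp
  obtain ⟨lam, hlam⟩ := Finset.nonempty_iff_ne_empty.2 hint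
  rw [Finset.mem_inter] at hlam
  obtain ⟨n, hnj, mu, hmu, hSmu⟩ :=
    hWC j t hact ⟨lam, hlam.1, hnotj lam hlam.2⟩
  rw [Finset.mem_inter] at hmu
  refine ⟨⟨hji, hint⟩, n, ⟨hnj, ?_⟩, ?_⟩
  · exact Finset.nonempty_iff_ne_empty.1 ⟨mu, Finset.mem_inter.2 ⟨hmu.2, hmu.1⟩⟩
  · by_contra h
    obtain ⟨lam', hlam'⟩ := Finset.nonempty_iff_ne_empty.2 h
    rw [Finset.mem_inter] at hlam'
    have := hSP2 n t ⟨mu, hmu.2, hSmu⟩ lam' hlam'.1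
    rcases hlow lam' hlam'.2 with h0 | ⟨m, hm, hjm⟩
    · simp [this] at h0
    · rw [this] at hm
      injection hm with hm
      omega
end

section
/- Consider a schedule S implementing SP². Let i and j be flow indices with j < i and Λ_j ∩ Λ_i ≠ ∅. Suppose flow f_j has a message released at time t_j ∈ ℕ with response-time bound R_j ∈ ℕ, i.e., f_j is active at a time t only if t_j ≤ t < t_j + R_j, and suppose f_j is feasibly scheduled, i.e., the number of times t with t_j ≤ t < t_j + R_j at which S_λ(t) = some j for every λ ∈ Λ_j equals C_j (with C_j ≤ R_j). Then the number of times t at which f_j is Λ_i-self-suspended is at most R_j − C_j. -/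
/-- Theorem 2: under an SP² schedule, if the higher-priority flow
`j` (with `j < i` and `Λ j ∩ Λ i ≠ ∅`) is released at `tj`, is only active within
`[tj, tj + Rj)`, and is feasibly scheduled, i.e., transmits simultaneously on all its
links during exactly `Cj ≤ Rj` time units of that window, then the number of times at
which `j` is `Λ i`-self-suspended is at most `Rj - Cj`. -/
theorem stmt2 {Link : Type*} [DecidableEq Link] (Λ : ℕ → Finset Link)
    (hne : ∀ i, (Λ i).Nonempty)
    (S : Link → ℕ → Option ℕ) (active : ℕ → ℕ → Prop)
    (hSP2 : ImplementsSP2 Λ S)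
    (i j : ℕ) (hji : j < i) (hint : Λ j ∩ Λ i ≠ ∅)
    (tj Rj Cj : ℕ) (hCR : Cj ≤ Rj)
    (hactive : ∀ t, active j t → tj ≤ t ∧ t < tj + Rj)
    (hfeasible :
      {t : ℕ | tj ≤ t ∧ t < tj + Rj ∧ ∀ lam ∈ Λ j, S lam t = some j}.ncard = Cj) :
    {t : ℕ | SelfSuspended Λ S active i j t}.ncard ≤ Rj - Cj := by
  obtain ⟨lam0, hlam0⟩ := Finset.nonempty_iff_ne_empty.2 hint
  rw [Finset.mem_inter] at hlam0
  set W : Set ℕ := Set.Ico tj (tj + Rj) with hW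
  set T : Set ℕ := {t : ℕ | tj ≤ t ∧ t < tj + Rj ∧ ∀ lam ∈ Λ j, S lam t = some j}
  have hWfin : W.Finite := Set.finite_Ico _ _
  have hTW : T ⊆ W := fun t ht => ⟨ht.1, ht.2.1⟩
  have hsub : {t : ℕ | SelfSuspended Λ S active i j t} ⊆ W \ T := by
    intro t ht
    obtain ⟨hact, _, _, h4⟩ := ht
    have hw := hactive t hact
    refine ⟨⟨hw.1, hw.2⟩, ?_⟩
    intro hT
    exact h4 lam0 hlam0.2 (hT.2.2 lam0 hlam0.1)
  calc {t : ℕ | SelfSuspended Λ S active i j t}.ncard ≤ (W \ T).ncard :=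
        Set.ncard_le_ncard hsub (hWfin.subset Set.diff_subset)
    _ = W.ncard - T.ncard := Set.ncard_diff hTW (hWfin.subset hTW)
    _ = Rj - Cj := by
        rw [hfeasible, hW, Set.ncard_eq_toFinset_card', Set.toFinset_Ico, Nat.card_Ico]
        omega
end

section
/- Fix integers η ≥ 1 and C ≥ 1. Every series of progressions from the initial buffer state (C, 0, …, 0) to the final buffer state (0, …, 0, C) has length at least C + η − 1. -/
/-- The buffer state obtained from `B` by one progression step with choice vector `z`:
node `k` loses `z k` flits over its outgoing link (if `k < η`) and gains `z (k-1)` flits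
over its incoming link (if `k > 0`). -/
def update (η : ℕ) (B : Fin (η + 1) → ℕ) (z : Fin η → ℕ) : Fin (η + 1) → ℕ :=
  fun k =>
    (B k - (if h : (k : ℕ) < η then z ⟨k, h⟩ else 0)) +
    (if h : 0 < (k : ℕ) then z ⟨(k : ℕ) - 1, by have := k.isLt; omega⟩ else 0)

/-- A valid progression step from buffer state `B` to buffer state `B'`:
there is a choice vector `z ∈ {0,1}^η`, `z ≠ 0`, with `z j ≤ B j` (a flit can only be
forwarded by link `j` if it is buffered at node `j`), and `B'` is the resulting state. -/
def ValidStep (η : ℕ) (B B' : Fin (η + 1) → ℕ) : Prop :=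
  ∃ z : Fin η → ℕ, (∀ j, z j ≤ 1) ∧ z ≠ 0 ∧ (∀ j : Fin η, z j ≤ B j.castSucc) ∧
    B' = update η B z

/-- The initial buffer state `(C, 0, …, 0)`: all `C` flits at the source node. -/
def initState (η C : ℕ) : Fin (η + 1) → ℕ := fun k => if (k : ℕ) = 0 then C else 0

/-- The final buffer state `(0, …, 0, C)`: all `C` flits at the destination node. -/
def finalState (η C : ℕ) : Fin (η + 1) → ℕ := fun k => if (k : ℕ) = η then C else 0

/-- `B 0, B 1, …, B L` is a series of progressions of length `L` from the initial
buffer state to the final buffer state. -/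
def IsSeries (η C L : ℕ) (B : ℕ → Fin (η + 1) → ℕ) : Prop :=
  B 0 = initState η C ∧ B L = finalState η C ∧ ∀ m < L, ValidStep η (B m) (B (m + 1))

/-- every series of progressions from `(C, 0, …, 0)` to
`(0, …, 0, C)` has length at least `C + η - 1`. -/
theorem stmt7 (η C : ℕ) (hη : 1 ≤ η) (hC : 1 ≤ C)
    (L : ℕ) (B : ℕ → Fin (η + 1) → ℕ) (hB : IsSeries η C L B) :
    C + η - 1 ≤ L := by
  obtain ⟨h0, hL, hstep⟩ := hB
  have hzero : ∀ m, m ≤ L → ∀ k : Fin (η+1), m < (k:ℕ) → B m k = 0 := by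
    intro m
    induction m with
    | zero =>
      intro _ k hk
      rw [h0]; simp only [initState]; rw [if_neg (by omega)]
    | succ m ih =>
      intro hm k hk
      obtain ⟨z, hz1, hzne, hzle, hupd⟩ := hstep m (by omega)
      rw [hupd]
      unfold update
      have hBk : B m k = 0 := ih (by omega) k (by omega)
      have h0k : 0 < (k:ℕ) := by omega
      rw [dif_pos h0k]
      have hzk : z ⟨(k:ℕ)-1, by have := k.isLt; omega⟩ = 0 := by
        have h1 := hzle ⟨(k:ℕ)-1, by have := k.isLt; omega⟩
        have hb : B m (Fin.castSucc ⟨(k:ℕ)-1, by have := k.isLt; omega⟩) = 0 :=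
          ih (by omega) _ (by simp [Fin.castSucc]; omega)
        omega
      rw [hzk, hBk]
      simp
  have hmain : ∀ m, m ≤ L → B m (Fin.last η) = 0 ∨ η - 1 + B m (Fin.last η) ≤ m := by
    intro m
    induction m with
    | zero =>
      intro _
      left
      rw [h0]; simp only [initState]
      rw [if_neg (by simp [Fin.last]; omega)]
    | succ m ih =>
      intro hm
      obtain ⟨z, hz1, hzne, hzle, hupd⟩ := hstep m (by omega)
      rw [hupd]
      unfold update
      have hlast : ((Fin.last η : Fin (η+1)) : ℕ) = η := rfl
      rw [dif_neg (by omega), dif_pos (by omega)]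
      set j : Fin η := ⟨η - 1, by omega⟩ with hj
      have hzj := hz1 j
      have hcast : z ⟨((Fin.last η : Fin (η+1)) : ℕ) - 1, by omega⟩ = z j := by congr 1
      rw [hcast]
      have ihm := ih (by omega)
      rcases Nat.eq_zero_or_pos (z j) with hz0 | hzpos
      · omega
      · have hble := hzle j
        have hmge : η - 1 ≤ m := by
          by_contra hcon
          have : B m j.castSucc = 0 := hzero m (by omega) _ (by simp [Fin.castSucc, hj]; omega)
          omega
        omega
  have hfin : B L (Fin.last η) = C := by
    rw [hL]; simp [finalState, Fin.last]
  have := hmain L le_rfl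
  omega
end

section
/- Fix integers η ≥ 1 and C ≥ 1. There exists a series of progressions from the initial buffer state (C, 0, …, 0) to the final buffer state (0, …, 0, C) of length exactly C + η − 1, namely the fastest series in which at every step each link with an available flit forwards one flit. -/
def myB (η C m : ℕ) : Fin (η + 1) → ℕ := fun k =>
  if (k : ℕ) = 0 then C - m
  else if (k : ℕ) = η then min C (m + 1 - η)
  else if (k : ℕ) ≤ m ∧ m < (k : ℕ) + C then 1 else 0

lemma myB_step (η C m : ℕ) (hη : 1 ≤ η) (hC : 1 ≤ C) :
    myB η C (m + 1) = update η (myB η C m) (fun j => min (myB η C m j.castSucc) 1) := by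
  funext k
  have hk := k.isLt
  simp only [update, myB, Fin.coe_castSucc]
  split_ifs <;> omega

/-- there is a series of progressions from `(C, 0, …, 0)` to
`(0, …, 0, C)` of length exactly `C + η - 1`, namely the fastest series in which at
every step each link with an available flit forwards one flit,
i.e., `z j = min (B j) 1`. -/
theorem stmt8 (η C : ℕ) (hη : 1 ≤ η) (hC : 1 ≤ C) :
    ∃ B : ℕ → Fin (η + 1) → ℕ, IsSeries η C (C + η - 1) B ∧
      ∀ m < C + η - 1, B (m + 1) = update η (B m) (fun j => min (B m j.castSucc) 1) := by
  refine ⟨myB η C, ⟨?_, ?_, ?_⟩, fun m _ => myB_step η C m hη hC⟩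
  · funext k
    simp only [myB, initState]
    split_ifs <;> omega
  · funext k
    have hk := k.isLt
    simp only [myB, finalState]
    split_ifs <;> omega
  · intro m hm
    refine ⟨fun j => min (myB η C m j.castSucc) 1, fun j => min_le_right _ _, ?_,
      fun j => min_le_left _ _, myB_step η C m hη hC⟩
    intro h0
    by_cases hmC : m < C
    · have := congrFun h0 ⟨0, hη⟩
      simp only [Pi.zero_apply, myB, Fin.coe_castSucc] at this
      split_ifs at this <;> omega
    · have := congrFun h0 ⟨m - C + 1, by omega⟩
      simp only [Pi.zero_apply, myB, Fin.coe_castSucc] at this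
      split_ifs at this <;> first | omega | exact ‹False›.elim
end

section
/- Fix integers η ≥ 1 and C ≥ 1. Every series of progressions from the initial buffer state (C, 0, …, 0) to the final buffer state (0, …, 0, C) has length at most C·η. -/
/-- potential -/
def pot (η : ℕ) (B : Fin (η + 1) → ℕ) : ℤ :=
  ∑ k : Fin (η + 1), (B k : ℤ) * ((η : ℤ) - (k : ℕ))

lemma pot_update (η : ℕ) (B : Fin (η + 1) → ℕ) (z : Fin η → ℕ)
    (hz : ∀ j : Fin η, z j ≤ B j.castSucc) :
    pot η (update η B z) = pot η B - ∑ j : Fin η, (z j : ℤ) := by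
  unfold pot update
  have hcast : ∀ k : Fin (η + 1),
      ((B k - (if h : (k : ℕ) < η then z ⟨k, h⟩ else 0) +
        (if h : 0 < (k : ℕ) then z ⟨(k : ℕ) - 1, by have := k.isLt; omega⟩ else 0) : ℕ) : ℤ)
      = (B k : ℤ) - (if h : (k : ℕ) < η then (z ⟨k, h⟩ : ℤ) else 0) +
        (if h : 0 < (k : ℕ) then (z ⟨(k : ℕ) - 1, by have := k.isLt; omega⟩ : ℤ) else 0) := by
    intro k
    by_cases h : (k : ℕ) < η
    · have hle : z ⟨k, h⟩ ≤ B k := by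
        have := hz ⟨k, h⟩
        have hk : (⟨k, h⟩ : Fin η).castSucc = k := by ext; simp
        rwa [hk] at this
      rw [dif_pos h, dif_pos h]
      push_cast [Nat.cast_sub hle]
      ring_nf
      by_cases h0 : 0 < (k : ℕ) <;> simp [h0]
    · rw [dif_neg h, dif_neg h]
      push_cast
      by_cases h0 : 0 < (k : ℕ) <;> simp [h0]
  simp only [hcast]
  have split : ∀ k : Fin (η + 1),
      ((B k : ℤ) - (if h : (k : ℕ) < η then (z ⟨k, h⟩ : ℤ) else 0) +
        (if h : 0 < (k : ℕ) then (z ⟨(k : ℕ) - 1, by have := k.isLt; omega⟩ : ℤ) else 0))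
        * ((η : ℤ) - (k : ℕ))
      = (B k : ℤ) * ((η : ℤ) - (k : ℕ))
        - (if h : (k : ℕ) < η then (z ⟨k, h⟩ : ℤ) else 0) * ((η : ℤ) - (k : ℕ))
        + (if h : 0 < (k : ℕ) then (z ⟨(k : ℕ) - 1, by have := k.isLt; omega⟩ : ℤ) else 0)
            * ((η : ℤ) - (k : ℕ)) := by
    intro k; ring
  simp only [split, Finset.sum_add_distrib, Finset.sum_sub_distrib]
  have h1 : ∑ k : Fin (η + 1),
      (if h : (k : ℕ) < η then (z ⟨k, h⟩ : ℤ) else 0) * ((η : ℤ) - (k : ℕ))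
      = ∑ j : Fin η, (z j : ℤ) * ((η : ℤ) - (j : ℕ)) := by
    rw [Fin.sum_univ_castSucc]
    simp [Fin.castSucc]
  have h2 : ∑ k : Fin (η + 1),
      (if h : 0 < (k : ℕ) then (z ⟨(k : ℕ) - 1, by have := k.isLt; omega⟩ : ℤ) else 0)
          * ((η : ℤ) - (k : ℕ))
      = ∑ j : Fin η, (z j : ℤ) * ((η : ℤ) - ((j : ℕ) + 1)) := by
    rw [Fin.sum_univ_succ]
    simp only [Fin.val_zero, lt_irrefl, dif_neg, Nat.lt_irrefl]
    simp [Fin.val_succ]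
  rw [h1, h2]
  have : ∑ j : Fin η, (z j : ℤ) * ((η : ℤ) - ((j : ℕ) + 1))
      = ∑ j : Fin η, ((z j : ℤ) * ((η : ℤ) - (j : ℕ)) - (z j : ℤ)) := by
    apply Finset.sum_congr rfl; intro j _; ring
  rw [this, Finset.sum_sub_distrib]
  ring

/-- every series of progressions from `(C, 0, …, 0)` to
`(0, …, 0, C)` has length at most `C * η`. -/
theorem stmt9 (η C : ℕ) (hη : 1 ≤ η) (hC : 1 ≤ C)
    (L : ℕ) (B : ℕ → Fin (η + 1) → ℕ) (hB : IsSeries η C L B) :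
    L ≤ C * η := by
  obtain ⟨h0, hL, hstep⟩ := hB
  have pot0 : pot η (B 0) = (C : ℤ) * η := by
    rw [h0]; unfold pot initState
    rw [Fin.sum_univ_succ]
    simp
  have potL : pot η (B L) = 0 := by
    rw [hL]; unfold pot finalState
    apply Finset.sum_eq_zero
    intro k _
    by_cases h : (k : ℕ) = η <;> simp [h]
  have key : ∀ m ≤ L, pot η (B m) + (m : ℤ) ≤ pot η (B 0) := by
    intro m hm
    induction m with
    | zero => simp
    | succ n ih =>
      have hn : n < L := by omega
      obtain ⟨z, hz1, hzne, hzle, hupd⟩ := hstep n hn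
      have hdec : pot η (B (n + 1)) = pot η (B n) - ∑ j : Fin η, (z j : ℤ) := by
        rw [hupd]; exact pot_update η (B n) z hzle
      have hsum : 1 ≤ ∑ j : Fin η, (z j : ℤ) := by
        obtain ⟨j, hj⟩ : ∃ j, z j ≠ 0 := by
          by_contra h; push_neg at h; exact hzne (funext fun j => h j)
        calc (1 : ℤ) ≤ (z j : ℤ) := by exact_mod_cast Nat.one_le_iff_ne_zero.mpr hj
        _ ≤ ∑ j : Fin η, (z j : ℤ) := Finset.single_le_sum (f := fun j : Fin η => (z j : ℤ)) (fun i _ => by positivity)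
            (Finset.mem_univ j)
      have := ih (by omega)
      push_cast
      omega
  have := key L le_rfl
  rw [pot0, potL] at this
  have : (L : ℤ) ≤ (C : ℤ) * η := by omega
  exact_mod_cast this
end

section
/- Fix integers η ≥ 1 and C ≥ 1. There exists a series of progressions from the initial buffer state (C, 0, …, 0) to the final buffer state (0, …, 0, C) of length exactly C·η, namely the slowest series in which every step forwards exactly one flit over exactly one link. -/
def Bfun (η C : ℕ) (m : ℕ) : Fin (η + 1) → ℕ := fun k =>
  (if (k : ℕ) = 0 then C - m / η - (if 0 < m % η then 1 else 0) else 0) +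
  (if 0 < m % η then (if (k : ℕ) = m % η then 1 else 0) else 0) +
  (if (k : ℕ) = η then m / η else 0)

lemma step_aux (η C : ℕ) (hη : 1 ≤ η) (m : ℕ) (hm : m < C * η) :
    ∃ z : Fin η → ℕ, (∀ j, z j ≤ 1) ∧
      (∀ j : Fin η, z j ≤ Bfun η C m j.castSucc) ∧ (∑ j, z j) = 1 ∧
      Bfun η C (m + 1) = update η (Bfun η C m) z := by
  have hη0 : 0 < η := hη
  obtain ⟨c, hc⟩ : ∃ c, m / η = c := ⟨_, rfl⟩
  obtain ⟨r, hr⟩ : ∃ r, m % η = r := ⟨_, rfl⟩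
  have hrη : r < η := hr ▸ Nat.mod_lt m hη0
  have hmeq : η * c + r = m := by rw [← hc, ← hr]; exact Nat.div_add_mod m η
  have hcC : c < C := by rw [← hc]; exact (Nat.div_lt_iff_lt_mul hη0).mpr hm
  have hdiv : (m + 1) / η = (if r + 1 = η then c + 1 else c) := by
    by_cases h : r + 1 = η
    · have e1 : m + 1 = η * (c + 1) := by rw [Nat.mul_succ]; omega
      rw [e1, Nat.mul_div_cancel_left _ hη0, if_pos h]
    · have hlt : r + 1 < η := by omega
      have e1 : m + 1 = r + 1 + η * c := by omega
      rw [e1, Nat.add_mul_div_left _ _ hη0, Nat.div_eq_of_lt hlt, if_neg h]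
      omega
  have hmod : (m + 1) % η = (if r + 1 = η then 0 else r + 1) := by
    by_cases h : r + 1 = η
    · have e1 : m + 1 = η * (c + 1) := by rw [Nat.mul_succ]; omega
      rw [e1, Nat.mul_mod_right, if_pos h]
    · have hlt : r + 1 < η := by omega
      have e1 : m + 1 = r + 1 + η * c := by omega
      rw [e1, Nat.add_mul_mod_self_left, Nat.mod_eq_of_lt hlt, if_neg h]
  clear hmeq
  refine ⟨fun j => if (j : ℕ) = r then 1 else 0, ?_, ?_, ?_, ?_⟩
  · intro j; by_cases h : (j : ℕ) = r <;> simp [h]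
  · intro j
    by_cases h : (j : ℕ) = r
    · simp only [h, if_pos rfl, Bfun, Fin.coe_castSucc, hc, hr]
      split_ifs <;> omega
    · simp [h]
  · have he : (fun j : Fin η => if (j : ℕ) = r then 1 else 0) =
        fun j : Fin η => if j = ⟨r, hrη⟩ then 1 else 0 := by
      funext j; simp [Fin.ext_iff]
    rw [he, Finset.sum_ite_eq' Finset.univ (⟨r, hrη⟩ : Fin η) (fun _ => 1)]
    simp
  · funext k
    have hk := k.isLt
    simp only [update, Bfun, hc, hr, hdiv, hmod]
    by_cases hkη : (k : ℕ) < η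
    · rw [dif_pos hkη]
      by_cases hk0 : 0 < (k : ℕ)
      · rw [dif_pos hk0]; split_ifs <;> omega
      · rw [dif_neg hk0]; split_ifs <;> omega
    · rw [dif_neg hkη]
      by_cases hk0 : 0 < (k : ℕ)
      · rw [dif_pos hk0]; split_ifs <;> omega
      · rw [dif_neg hk0]; split_ifs <;> omega

/-- there is a series of progressions from `(C, 0, …, 0)` to
`(0, …, 0, C)` of length exactly `C * η`, namely the slowest series in which every
step forwards exactly one flit over exactly one link, i.e., `∑ j, z j = 1`. -/
theorem stmt10 (η C : ℕ) (hη : 1 ≤ η) (hC : 1 ≤ C) :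
    ∃ B : ℕ → Fin (η + 1) → ℕ, IsSeries η C (C * η) B ∧
      ∀ m < C * η, ∃ z : Fin η → ℕ, (∀ j, z j ≤ 1) ∧
        (∀ j : Fin η, z j ≤ B m j.castSucc) ∧ (∑ j, z j) = 1 ∧
        B (m + 1) = update η (B m) z := by
  refine ⟨Bfun η C, ⟨?_, ?_, ?_⟩, fun m hm => step_aux η C hη m hm⟩
  · funext k
    simp only [Bfun, initState, Nat.zero_div, Nat.zero_mod, lt_self_iff_false, if_false, ite_self]
    split_ifs <;> omega
  · funext k
    have h1 : C * η / η = C := Nat.mul_div_cancel C hη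
    have h2 : C * η % η = 0 := Nat.mul_mod_left C η
    simp only [Bfun, finalState, h1, h2]
    split_ifs <;> omega
  · intro m hm
    obtain ⟨z, h1, h2, h3, h4⟩ := step_aux η C hη m hm
    refine ⟨z, h1, ?_, h2, h4⟩
    intro h
    rw [h] at h3
    simp at h3
end

section
/- Fix integers η ≥ 1 and C ≥ 1, and define the potential Φ(B) := Σ_{k=1}^{η+1} (η + 1 − k)·B_k for a buffer state B. For every valid progression step from B to B' with choice vector z, one has Φ(B') = Φ(B) − Σ_{j=1}^{η} z_j, and Σ_{j=1}^{η} z_j ≥ 1. Moreover Φ((C,0,…,0)) = C·η and Φ((0,…,0,C)) = 0. -/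
/-- The potential `Φ(B) = ∑ₖ (η + 1 - k) · Bₖ` (1-indexed), i.e., with 0-indexed
nodes `k : Fin (η+1)`, `Φ(B) = ∑ₖ (η - k) · B k`: each flit is weighted by its
remaining number of hops to the destination. -/
def potential (η : ℕ) (B : Fin (η + 1) → ℕ) : ℕ :=
  ∑ k : Fin (η + 1), (η - (k : ℕ)) * B k

lemma pot_cast (η : ℕ) (B : Fin (η + 1) → ℕ) :
    ((potential η B : ℕ) : ℤ)
      = ∑ k : Fin (η + 1), ((η : ℤ) - (k : ℕ)) * (B k : ℤ) := by
  unfold potential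
  push_cast
  refine Finset.sum_congr rfl fun k _ => ?_
  have hk : (k : ℕ) ≤ η := Nat.lt_succ_iff.mp k.isLt
  rw [Nat.cast_sub hk]

lemma update_cast (η : ℕ) (B : Fin (η + 1) → ℕ) (z : Fin η → ℕ)
    (hzB : ∀ j : Fin η, z j ≤ B j.castSucc) (k : Fin (η+1)) :
    ((update η B z k : ℕ) : ℤ)
      = (B k : ℤ) - (if h : (k:ℕ) < η then (z ⟨k, h⟩ : ℤ) else 0)
        + (if h : 0 < (k:ℕ) then (z ⟨(k:ℕ)-1, by have := k.isLt; omega⟩ : ℤ) else 0) := by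
  unfold update
  split_ifs with h1 h2 h2 <;>
  · first
    | (have hle : z ⟨(k:ℕ), h1⟩ ≤ B k := by simpa using hzB ⟨(k:ℕ), h1⟩
       omega)
    | omega

/-- every valid progression step with choice vector `z` decreases
the potential `Φ` by exactly `∑ j, z j ≥ 1`; moreover `Φ((C,0,…,0)) = C·η` and
`Φ((0,…,0,C)) = 0`. -/
theorem stmt11 (η C : ℕ) (hη : 1 ≤ η) (hC : 1 ≤ C) :
    (∀ (B B' : Fin (η + 1) → ℕ) (z : Fin η → ℕ),
      (∀ j, z j ≤ 1) → z ≠ 0 → (∀ j : Fin η, z j ≤ B j.castSucc) →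
      B' = update η B z →
        (potential η B' : ℤ) = (potential η B : ℤ) - ∑ j, (z j : ℤ) ∧
        1 ≤ ∑ j, (z j : ℤ)) ∧
    potential η (initState η C) = C * η ∧
    potential η (finalState η C) = 0 := by
  refine ⟨?_, ?_, ?_⟩
  · intro B B' z hz1 hz0 hzB hB'
    have hsum1 : 1 ≤ ∑ j, (z j : ℤ) := by
      obtain ⟨j, hj⟩ : ∃ j, z j ≠ 0 := by
        by_contra h; push_neg at h; exact hz0 (funext fun j => h j)
      have h1 : (1:ℤ) ≤ (z j : ℤ) := by exact_mod_cast Nat.one_le_iff_ne_zero.mpr hj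
      have h2 : (z j : ℤ) ≤ ∑ j, (z j : ℤ) :=
        Finset.single_le_sum (f := fun i => (z i : ℤ)) (fun i _ => by positivity)
          (Finset.mem_univ j)
      exact le_trans h1 h2
    refine ⟨?_, hsum1⟩
    subst hB'
    rw [pot_cast, pot_cast]
    calc ∑ k : Fin (η+1), ((η:ℤ) - (k:ℕ)) * ((update η B z k : ℕ) : ℤ)
        = ∑ k : Fin (η+1), (((η:ℤ) - (k:ℕ)) * (B k : ℤ)
            - ((η:ℤ) - (k:ℕ)) * (if h : (k:ℕ) < η then (z ⟨k, h⟩ : ℤ) else 0)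
            + ((η:ℤ) - (k:ℕ)) *
              (if h : 0 < (k:ℕ) then (z ⟨(k:ℕ)-1, by have := k.isLt; omega⟩ : ℤ) else 0)) := by
          refine Finset.sum_congr rfl fun k _ => ?_
          rw [update_cast η B z hzB k]; ring
      _ = ∑ k : Fin (η+1), ((η:ℤ) - (k:ℕ)) * (B k : ℤ)
            - ∑ k : Fin (η+1), ((η:ℤ) - (k:ℕ)) * (if h : (k:ℕ) < η then (z ⟨k, h⟩ : ℤ) else 0)
            + ∑ k : Fin (η+1), ((η:ℤ) - (k:ℕ)) *
              (if h : 0 < (k:ℕ) then (z ⟨(k:ℕ)-1, by have := k.isLt; omega⟩ : ℤ) else 0) := by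
          rw [Finset.sum_add_distrib, Finset.sum_sub_distrib]
      _ = ∑ k : Fin (η+1), ((η:ℤ) - (k:ℕ)) * (B k : ℤ) - ∑ j, (z j : ℤ) := by
          have hO : ∑ k : Fin (η+1), ((η:ℤ) - (k:ℕ)) *
              (if h : (k:ℕ) < η then (z ⟨k, h⟩ : ℤ) else 0)
              = ∑ j : Fin η, ((η:ℤ) - (j:ℕ)) * (z j : ℤ) := by
            rw [Fin.sum_univ_castSucc]
            simp
          have hI : ∑ k : Fin (η+1), ((η:ℤ) - (k:ℕ)) *
              (if h : 0 < (k:ℕ) then (z ⟨(k:ℕ)-1, by have := k.isLt; omega⟩ : ℤ) else 0)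
              = ∑ j : Fin η, ((η:ℤ) - ((j:ℕ)+1)) * (z j : ℤ) := by
            rw [Fin.sum_univ_succ]
            simp
          rw [hO, hI]
          have : ∑ j : Fin η, ((η:ℤ) - (j:ℕ)) * (z j : ℤ)
              - ∑ j : Fin η, ((η:ℤ) - ((j:ℕ)+1)) * (z j : ℤ) = ∑ j, (z j : ℤ) := by
            rw [← Finset.sum_sub_distrib]
            refine Finset.sum_congr rfl fun j _ => ?_
            ring
          linarith [this]
  · unfold potential initState
    rw [Fin.sum_univ_succ]
    simp [mul_comm]
  · unfold potential finalState
    apply Finset.sum_eq_zero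
    intro k _
    by_cases h : (k:ℕ) = η <;> simp [h]
end

section
/- Fix integers η ≥ 1 and C ≥ 1. Let B^0, B^1, …, B^m be any sequence of buffer states with B^0 = (C, 0, …, 0) such that each consecutive pair is related by a valid progression step. Then the number of flits received at the destination after m steps satisfies B^m_{η+1} ≤ max(0, m − η + 1). -/
def zext (η : ℕ) (z : Fin η → ℕ) (j : ℕ) : ℕ := if h : j < η then z ⟨j, h⟩ else 0

def bext (η : ℕ) (B : Fin (η + 1) → ℕ) (j : ℕ) : ℕ := if h : j < η + 1 then B ⟨j, h⟩ else 0

def mS (η : ℕ) (B : Fin (η + 1) → ℕ) (k : ℕ) : ℕ := ∑ j ∈ Finset.Ico k (η + 1), bext η B j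

lemma bext_update (η : ℕ) (B : Fin (η + 1) → ℕ) (z : Fin η → ℕ) (j : ℕ)
    (h1 : 1 ≤ j) (h2 : j ≤ η) :
    bext η (update η B z) j = (bext η B j - zext η z j) + zext η z (j - 1) := by
  have hj : j < η + 1 := by omega
  have hj1 : j - 1 < η := by omega
  have h0 : 0 < j := h1
  simp [bext, zext, update, hj, hj1, h0]

lemma zext_le_bext (η : ℕ) (B : Fin (η + 1) → ℕ) (z : Fin η → ℕ)
    (hzB : ∀ j : Fin η, z j ≤ B j.castSucc) (j : ℕ) :
    zext η z j ≤ bext η B j := by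
  unfold zext bext
  split
  · next h =>
    rw [dif_pos (by omega : j < η + 1)]
    exact hzB ⟨j, h⟩
  · exact Nat.zero_le _

lemma mS_update (η : ℕ) (B : Fin (η + 1) → ℕ) (z : Fin η → ℕ)
    (hzB : ∀ j : Fin η, z j ≤ B j.castSucc) (k : ℕ) (hk1 : 1 ≤ k) (hk2 : k ≤ η) :
    mS η (update η B z) k = mS η B k + zext η z (k - 1) := by
  unfold mS
  have step1 : ∀ j ∈ Finset.Ico k (η + 1),
      bext η (update η B z) j = (bext η B j - zext η z j) + zext η z (j - 1) := by
    intro j hj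
    rw [Finset.mem_Ico] at hj
    exact bext_update η B z j (by omega) (by omega)
  rw [Finset.sum_congr rfl step1, Finset.sum_add_distrib]
  have reind : ∑ j ∈ Finset.Ico k (η + 1), zext η z (j - 1)
      = ∑ i ∈ Finset.Ico (k - 1) η, zext η z i := by
    rw [Finset.sum_Ico_eq_sum_range, Finset.sum_Ico_eq_sum_range]
    have h : η + 1 - k = η - (k - 1) := by omega
    rw [h]
    exact Finset.sum_congr rfl (fun i _ => by congr 1; omega)
  rw [reind, Finset.sum_eq_sum_Ico_succ_bot (by omega : k - 1 < η)]
  have hk' : k - 1 + 1 = k := by omega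
  rw [hk']
  have top : ∑ i ∈ Finset.Ico k η, zext η z i = ∑ j ∈ Finset.Ico k (η + 1), zext η z j := by
    rw [Finset.sum_Ico_succ_top (by omega : k ≤ η)]
    simp [zext]
  rw [top]
  have comb : ∑ j ∈ Finset.Ico k (η + 1), (bext η B j - zext η z j)
      + ∑ j ∈ Finset.Ico k (η + 1), zext η z j
      = ∑ j ∈ Finset.Ico k (η + 1), bext η B j := by
    rw [← Finset.sum_add_distrib]
    exact Finset.sum_congr rfl fun j _ => Nat.sub_add_cancel (zext_le_bext η B z hzB j)
  omega

lemma mS_bot (η : ℕ) (B : Fin (η + 1) → ℕ) (k : ℕ) (hk1 : 1 ≤ k) (hk2 : k ≤ η) :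
    mS η B (k - 1) = bext η B (k - 1) + mS η B k := by
  unfold mS
  rw [Finset.sum_eq_sum_Ico_succ_bot (by omega : k - 1 < η + 1)]
  rw [(by omega : k - 1 + 1 = k)]

lemma mS_init (η C k : ℕ) (hk : 1 ≤ k) : mS η (initState η C) k = 0 := by
  unfold mS
  apply Finset.sum_eq_zero
  intro j hj
  rw [Finset.mem_Ico] at hj
  simp only [bext, initState]
  split <;> simp <;> omega

lemma mS_last (η : ℕ) (B : Fin (η + 1) → ℕ) : mS η B η = B (Fin.last η) := by
  unfold mS
  rw [Nat.Ico_succ_singleton, Finset.sum_singleton]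
  simp [bext, Fin.last]

/-- along any sequence of valid progression steps starting from the
initial state `(C, 0, …, 0)`, the number of flits received at the destination after
`m` steps is at most `max 0 (m - η + 1)`. -/
theorem stmt12 (η C : ℕ) (hη : 1 ≤ η) (hC : 1 ≤ C)
    (m : ℕ) (B : ℕ → Fin (η + 1) → ℕ)
    (h0 : B 0 = initState η C)
    (hstep : ∀ k < m, ValidStep η (B k) (B (k + 1))) :
    (B m (Fin.last η) : ℤ) ≤ max 0 ((m : ℤ) - (η : ℤ) + 1) := by
  have key : ∀ k, 1 ≤ k → k ≤ η → ∀ n ≤ m, mS η (B n) k ≤ n + 1 - k := by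
    intro k hk1
    induction k with
    | zero => omega
    | succ k ih =>
      intro hk2 n hn
      induction n with
      | zero =>
        rw [h0, mS_init η C (k + 1) (by omega)]
        exact Nat.zero_le _
      | succ n ihn =>
        obtain ⟨z, hz1, -, hzB, hB'⟩ := hstep n (by omega)
        have heq : mS η (B (n + 1)) (k + 1) = mS η (B n) (k + 1) + zext η z k := by
          rw [hB']
          have := mS_update η (B n) z hzB (k + 1) (by omega) hk2
          simpa using this
        rcases Nat.eq_zero_or_pos k with hk0 | hkpos
        · subst hk0
          have h1 := ihn (by omega)
          have h2 : zext η z 0 ≤ 1 := by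
            unfold zext
            rw [dif_pos (by omega : 0 < η)]
            exact hz1 _
          omega
        · have hzb : zext η z k ≤ bext η (B n) k := by
            have := zext_le_bext η (B n) z hzB k
            exact this
          have hsplit := mS_bot η (B n) (k + 1) (by omega) hk2
          have hIH := ih hkpos (by omega) n (by omega)
          simp only [Nat.add_sub_cancel] at hsplit
          omega
  have hkey := key η hη le_rfl m le_rfl
  rw [mS_last] at hkey
  have h3 : (B m (Fin.last η) : ℤ) ≤ ((m + 1 - η : ℕ) : ℤ) := by exact_mod_cast hkey
  rcases le_or_gt η m with hc | hc
  · refine le_max_of_le_right (h3.trans_eq ?_)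
    omega
  · refine le_max_of_le_left (h3.trans_eq ?_)
    omega
end
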